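/- Let n_1 > n_2 > ⋯ > n_r ≥ 1 be pairwise distinct positive integers and let R be a Lie subalgebra of the block-diagonal Lie algebra ⊕_{j=1}^r su(n_j) ⊆ su(n_1 + ⋯ + n_r) (matrices diag(A_1,…,A_r) with A_j ∈ su(n_j)). Suppose R is 'weakly subspace controllable': for every j and every Z ∈ su(n_j) there exists an element of R whose j-th block equals Z. Then R = ⊕_{j=1}^r su(n_j). -/

import Mathlib

/-!
Each block projection `π j : R → su(n j)` is a surjective Lie algebra map onto a Lie algebra that
is simple (or zero, when `n j = 1`). For `j ≠ k` the image `π j (ker π k)` is an ideal of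
`su(n j)`, so it is `0` or everything. If it were `0`, then either `π k (ker π j)` is `0` too, so
the two kernels agree and `su(n j) ≅ R ⧸ ker ≅ su(n k)` as vector spaces, which is impossible as
`dim su(n) = n² - 1`; or `π k (ker π j)` is everything, which forces `π j = 0`. Since
`⁅π j I, π j J⁆ ⊆ π j (I ⊓ J)` and `su(n j)` is not abelian, simplicity lets us intersect these
kernels one at a time: `R` contains every element supported on the single block `j`, hence all
block-diagonal matrices.

Simplicity of `su(n)` is reduced to `sl(n, ℂ) = su(n) ⊕ i su(n)`: the complexification `I + i I`
of a nonzero ideal `I` is stable under brackets with traceless matrices and contains a non-scalar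
matrix, so it contains a matrix unit `E_pq` and then every traceless matrix.
-/

open scoped Matrix

attribute [local instance 100] LieRing.ofAssociativeRing

namespace LieHom

open LieAlgebra Module

variable {K A L L' : Type*} [CommRing K] [LieRing A] [LieAlgebra K A]
  [LieRing L] [LieAlgebra K L] [LieRing L'] [LieAlgebra K L']

theorem finrank_eq_of_ker_eq {f : A →ₗ⁅K⁆ L} {g : A →ₗ⁅K⁆ L'} (hf : Function.Surjective f)
    (hg : Function.Surjective g) (h : f.ker = g.ker) : finrank K L = finrank K L' := by
  have h' : LinearMap.ker (f : A →ₗ[K] L) = LinearMap.ker (g : A →ₗ[K] L') := by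
    rw [← ker_toSubmodule, ← ker_toSubmodule, h]
  exact ((LinearMap.quotKerEquivOfSurjective _ hf).symm.trans
    ((Submodule.quotEquivOfEq _ _ h').trans (LinearMap.quotKerEquivOfSurjective _ hg))).finrank_eq

theorem map_ker_eq_top {f : A →ₗ⁅K⁆ L} {g : A →ₗ⁅K⁆ L'} (hf : Function.Surjective f)
    (hg : Function.Surjective g) [IsSimple K L] (hL' : ∀ I : LieIdeal K L', I = ⊥ ∨ I = ⊤)
    (hrank : finrank K L ≠ finrank K L') : g.ker.map f = ⊤ := by
  refine (IsSimple.eq_bot_or_eq_top _).resolve_left fun h => ?_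
  rw [LieIdeal.map_eq_bot_iff] at h
  rcases hL' (f.ker.map g) with h' | h'
  · rw [LieIdeal.map_eq_bot_iff] at h'
    exact hrank (finrank_eq_of_ker_eq hf hg (le_antisymm h' h))
  · have : Nontrivial L := IsSimple.nontrivial K L
    obtain ⟨x, hx⟩ := exists_ne (0 : L)
    obtain ⟨a, rfl⟩ := hf x
    obtain ⟨⟨b, hb⟩, hab⟩ :=
      LieIdeal.mem_map_of_surjective hg (h'.symm ▸ LieSubmodule.mem_top (g a))
    have hab' : a - b ∈ g.ker := by simp [mem_ker, hab]
    have hfab := mem_ker.mp (h hab')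
    rw [map_sub, mem_ker.mp hb, sub_zero] at hfab
    exact hx hfab

end LieHom

namespace LieIdeal

open LieAlgebra

variable {K A L : Type*} [CommRing K] [LieRing A] [LieAlgebra K A] [LieRing L] [LieAlgebra K L]

theorem map_inf_eq_top [IsSimple K L] {f : A →ₗ⁅K⁆ L} (hf : Function.Surjective f)
    {I J : LieIdeal K A} (hI : I.map f = ⊤) (hJ : J.map f = ⊤) : (I ⊓ J).map f = ⊤ := by
  refine (IsSimple.eq_bot_or_eq_top _).resolve_left fun h => ?_
  obtain ⟨x, y, hxy⟩ : ∃ x y : L, ⁅x, y⁆ ≠ 0 := by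
    by_contra! hcomm
    exact IsSimple.non_abelian K ⟨hcomm⟩
  obtain ⟨⟨a, ha⟩, rfl⟩ := mem_map_of_surjective hf (hI.symm ▸ LieSubmodule.mem_top x)
  obtain ⟨⟨b, hb⟩, rfl⟩ := mem_map_of_surjective hf (hJ.symm ▸ LieSubmodule.mem_top y)
  have hab : ⁅a, b⁆ ∈ I ⊓ J := ⟨lie_mem_left K A I a b ha, J.lie_mem hb⟩
  rw [map_eq_bot_iff] at h
  exact hxy (by simpa using h hab)

end LieIdeal

theorem LieAlgebra.eq_bot_or_eq_top_of_isSimple_or_subsingleton {K L : Type*} [CommRing K]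
    [LieRing L] [LieAlgebra K L] (h : IsSimple K L ∨ Subsingleton L) (I : LieIdeal K L) :
    I = ⊥ ∨ I = ⊤ := by
  rcases h with h | h
  · exact IsSimple.eq_bot_or_eq_top I
  · exact Or.inl (Subsingleton.elim _ _)

namespace LieHom

open LieAlgebra Module

variable {K A κ : Type*} [CommRing K] [LieRing A] [LieAlgebra K A] {L : κ → Type*}
  [∀ j, LieRing (L j)] [∀ j, LieAlgebra K (L j)] {π : ∀ j, A →ₗ⁅K⁆ L j}

theorem map_iInf_ker_eq_top (hπ : ∀ j, Function.Surjective (π j))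
    (hL : ∀ j, IsSimple K (L j) ∨ Subsingleton (L j))
    (hrank : Pairwise fun j k => finrank K (L j) ≠ finrank K (L k)) {j : κ} [IsSimple K (L j)]
    (T : Finset κ) (hj : j ∉ T) : (⨅ k ∈ T, (π k).ker).map (π j) = ⊤ := by
  classical
  induction T using Finset.induction_on with
  | empty => simpa [← idealRange_eq_map] using (π j).idealRange_eq_top_of_surjective (hπ j)
  | insert k T _ ih =>
    rw [Finset.iInf_insert]
    have hjk : j ≠ k := fun h => hj (h ▸ Finset.mem_insert_self j T)
    exact LieIdeal.map_inf_eq_top (hπ j)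
      (map_ker_eq_top (hπ j) (hπ k) (eq_bot_or_eq_top_of_isSimple_or_subsingleton (hL k))
        (hrank hjk))
      (ih fun h => hj (Finset.mem_insert_of_mem h))

theorem surjective_pi_of_pairwise_finrank_ne [Fintype κ] [DecidableEq κ]
    (hπ : ∀ j, Function.Surjective (π j)) (hL : ∀ j, IsSimple K (L j) ∨ Subsingleton (L j))
    (hrank : Pairwise fun j k => finrank K (L j) ≠ finrank K (L k)) :
    Function.Surjective fun a j => π j a := by
  have hsingle : ∀ j (x : L j), ∃ a, ∀ k, π k a = Pi.single j x k := by
    intro j x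
    rcases hL j with hj | hj
    · obtain ⟨⟨a, ha⟩, rfl⟩ := LieIdeal.mem_map_of_surjective (hπ j)
        ((map_iInf_ker_eq_top hπ hL hrank _ (Finset.notMem_erase j Finset.univ)).symm ▸
          LieSubmodule.mem_top x)
      refine ⟨a, fun k => ?_⟩
      rcases eq_or_ne k j with rfl | hk
      · simp
      · simp only [LieSubmodule.mem_iInf, Finset.mem_erase, Finset.mem_univ, and_true] at ha
        simpa [hk] using ha k hk
    · exact ⟨0, fun k => by simp [Subsingleton.elim x 0]⟩
  intro x
  choose a ha using fun j => hsingle j (x j)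
  exact ⟨∑ j, a j, funext fun k => by simp [map_sum, ha]⟩

end LieHom

namespace Matrix

variable {K ι : Type*} [Field K] [Fintype ι] [DecidableEq ι]

theorem lie_single_lie_single {p q : ι} (hpq : p ≠ q) (X : Matrix ι ι K) :
    ⁅single p q (1 : K), ⁅single p q (1 : K), X⁆⁆ = (-2 * X q p) • single p q (1 : K) := by
  have h0 : single p q (1 : K) * single p q 1 = 0 := single_mul_single_of_ne 1 p q p hpq.symm 1
  calc ⁅single p q (1 : K), ⁅single p q (1 : K), X⁆⁆
      = single p q 1 * single p q 1 * X - (2 : K) • (single p q 1 * X * single p q 1)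
        + X * (single p q 1 * single p q 1) := by
        simp only [Ring.lie_def, two_smul]
        noncomm_ring
    _ = (-2 * X q p) • single p q (1 : K) := by
        rw [h0, single_mul_mul_single, smul_single]
        simp

theorem lie_single_diagonal (d : ι → K) (p q : ι) :
    ⁅single p q (1 : K), diagonal d⁆ = (d q - d p) • single p q (1 : K) := by
  ext a b
  by_cases ha : p = a <;> by_cases hb : q = b <;>
    simp_all [Ring.lie_def, mul_diagonal, eq_comm]

theorem eq_sum_smul_single_sub_ite {Z : Matrix ι ι K} (hZ : Z.trace = 0) (i₀ : ι) :
    Z = ∑ a, ∑ b, Z a b • (single a b (1 : K) - if a = b then single i₀ i₀ 1 else 0) := by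
  simp only [smul_sub, Finset.sum_sub_distrib, smul_ite, smul_zero, Finset.sum_ite_eq,
    Finset.mem_univ, if_true]
  rw [← Finset.sum_smul]
  change Z = _ - Z.trace • _
  simp only [hZ, zero_smul, sub_zero, smul_single, smul_eq_mul, mul_one]
  exact matrix_eq_sum_single Z

section BracketStable

variable {W : Submodule K (Matrix ι ι K)}
  (hW : ∀ Y : Matrix ι ι K, Y.trace = 0 → ∀ X ∈ W, ⁅Y, X⁆ ∈ W)
include hW

theorem single_mem_of_apply_ne_zero (h2 : (2 : K) ≠ 0) {X : Matrix ι ι K} (hX : X ∈ W)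
    {p q : ι} (hpq : p ≠ q) (hXqp : X q p ≠ 0) : single p q (1 : K) ∈ W := by
  have hE : (single p q (1 : K)).trace = 0 := trace_single_eq_of_ne p q 1 hpq
  have h := W.smul_mem (-2 * X q p)⁻¹ (hW _ hE _ (hW _ hE _ hX))
  rwa [lie_single_lie_single hpq, smul_smul, inv_mul_cancel₀ (by simp [h2, hXqp]),
    one_smul] at h

theorem exists_single_mem (h2 : (2 : K) ≠ 0) {X : Matrix ι ι K} (hX : X ∈ W)
    (hXs : X ∉ Set.range (scalar ι)) : ∃ p q, p ≠ q ∧ single p q (1 : K) ∈ W := by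
  by_cases hoff : ∃ p q, p ≠ q ∧ X q p ≠ 0
  · obtain ⟨p, q, hpq, hXqp⟩ := hoff
    exact ⟨p, q, hpq, single_mem_of_apply_ne_zero hW h2 hX hpq hXqp⟩
  push Not at hoff
  obtain ⟨p, q, hpq, hcomm⟩ : ∃ p q, p ≠ q ∧ ¬Commute (single p q (1 : K)) X := by
    by_contra! h
    exact hXs (mem_range_scalar_of_commute_single h)
  have hdiag : diagonal (fun i => X i i) = X := by
    ext a b
    by_cases hab : a = b
    · simp [hab]
    · simp [hab, hoff b a (Ne.symm hab)]
  have hlie := lie_single_diagonal (fun i => X i i) p q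
  rw [hdiag] at hlie
  have hc : X q q - X p p ≠ 0 := by
    intro hc
    rw [hc, zero_smul, Ring.lie_def, sub_eq_zero] at hlie
    exact hcomm hlie
  have h := W.smul_mem (X q q - X p p)⁻¹ (hW _ (trace_single_eq_of_ne p q 1 hpq) _ hX)
  rw [hlie, smul_smul, inv_mul_cancel₀ hc, one_smul] at h
  exact ⟨p, q, hpq, h⟩

theorem single_mem_of_single_mem (h2 : (2 : K) ≠ 0) {p q : ι} (hpq : p ≠ q)
    (hE : single p q (1 : K) ∈ W) {a b : ι} (hab : a ≠ b) : single a b (1 : K) ∈ W := by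
  have hcol : ∀ {s t : ι} (u : ι), single s t (1 : K) ∈ W → u ≠ t → single u t (1 : K) ∈ W := by
    intro s t u hst hut
    rcases eq_or_ne u s with rfl | hus
    · exact hst
    have h := hW _ (trace_single_eq_of_ne u s 1 hus) _ hst
    rwa [Ring.lie_def, single_mul_single_same, single_mul_single_of_ne 1 s t u hut.symm,
      mul_one, sub_zero] at h
  have hrow : ∀ {s t : ι} (v : ι), single s t (1 : K) ∈ W → v ≠ s → single s v (1 : K) ∈ W := by
    intro s t v hst hvs
    rcases eq_or_ne v t with rfl | hvt
    · exact hst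
    have h := W.neg_mem (hW _ (trace_single_eq_of_ne t v 1 hvt.symm) _ hst)
    rwa [Ring.lie_def, single_mul_single_same, single_mul_single_of_ne 1 t v s hvs,
      mul_one, zero_sub, neg_neg] at h
  rcases eq_or_ne a q with rfl | haq
  · exact hrow b (single_mem_of_apply_ne_zero hW h2 hE hpq.symm (by simp)) hab.symm
  · exact hrow b (hcol a hE haq) hab.symm

theorem traceless_mem_of_single_mem (h2 : (2 : K) ≠ 0) {p q : ι} (hpq : p ≠ q)
    (hE : single p q (1 : K) ∈ W) {Z : Matrix ι ι K} (hZ : Z.trace = 0) : Z ∈ W := by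
  have hsingle : ∀ a b, a ≠ b → single a b (1 : K) ∈ W := fun a b hab =>
    single_mem_of_single_mem hW h2 hpq hE hab
  rw [eq_sum_smul_single_sub_ite hZ p]
  refine Submodule.sum_mem _ fun a _ => Submodule.sum_mem _ fun b _ => W.smul_mem _ ?_
  rcases eq_or_ne a b with rfl | hab
  · rcases eq_or_ne a p with rfl | hap
    · simp
    have h := hW _ (trace_single_eq_of_ne a p 1 hap) _ (hsingle p a hap.symm)
    rw [if_pos rfl]
    rwa [Ring.lie_def, single_mul_single_same, single_mul_single_same, mul_one] at h
  · simpa [hab] using hsingle a b hab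

theorem traceless_mem_of_notMem_range_scalar (h2 : (2 : K) ≠ 0) {X : Matrix ι ι K} (hX : X ∈ W)
    (hXs : X ∉ Set.range (scalar ι)) {Z : Matrix ι ι K} (hZ : Z.trace = 0) : Z ∈ W := by
  obtain ⟨p, q, hpq, hE⟩ := exists_single_mem hW h2 hX hXs
  exact traceless_mem_of_single_mem hW h2 hpq hE hZ

end BracketStable

theorem eq_zero_of_add_I_smul_eq_zero {n : Type*} {A B : Matrix n n ℂ} (hA : Aᴴ = -A)
    (hB : Bᴴ = -B) (h : A + Complex.I • B = 0) : B = 0 := by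
  have h' : -A + Complex.I • B = 0 := by
    simpa [conjTranspose_smul, hA, hB] using congrArg conjTranspose h
  have h2 : (2 * Complex.I) • B = 0 := by
    rw [mul_smul, two_smul]
    calc Complex.I • B + Complex.I • B = (A + Complex.I • B) + (-A + Complex.I • B) := by abel
      _ = 0 := by rw [h, h', add_zero]
  exact (smul_eq_zero.mp h2).resolve_left (by simp)

end Matrix

section Complexification

open Complex

theorem smul_add_I_smul {V : Type*} [AddCommGroup V] [Module ℂ V] [Module ℝ V]
    [IsScalarTower ℝ ℂ V] (c : ℂ) (a b : V) :
    c • (a + I • b) = (c.re • a - c.im • b) + I • (c.im • a + c.re • b) := by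
  simp only [RCLike.real_smul_eq_coe_smul (K := ℂ)]
  match_scalars
  · linear_combination -(re_add_im c)
  · linear_combination -I * re_add_im c + (c.im : ℂ) * I_sq

theorem lie_add_I_smul_lie_add_I_smul {L : Type*} [LieRing L] [LieAlgebra ℂ L] (A B A' B' : L) :
    ⁅A' + I • B', A + I • B⁆ = (⁅A', A⁆ - ⁅B', B⁆) + I • (⁅A', B⁆ + ⁅B', A⁆) := by
  simp only [lie_add, add_lie, lie_smul, smul_lie, smul_add, smul_smul, I_mul_I, neg_one_smul]
  abel

variable {V : Type*} [AddCommGroup V] [Module ℂ V] [Module ℝ V] [IsScalarTower ℝ ℂ V]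

def Submodule.complexification (p : Submodule ℝ V) : Submodule ℂ V where
  carrier := {x | ∃ a ∈ p, ∃ b ∈ p, a + I • b = x}
  add_mem' := by
    rintro _ _ ⟨a, ha, b, hb, rfl⟩ ⟨a', ha', b', hb', rfl⟩
    exact ⟨a + a', p.add_mem ha ha', b + b', p.add_mem hb hb', by rw [smul_add]; abel⟩
  zero_mem' := ⟨0, p.zero_mem, 0, p.zero_mem, by simp⟩
  smul_mem' := by
    rintro c _ ⟨a, ha, b, hb, rfl⟩
    exact ⟨_, p.sub_mem (p.smul_mem _ ha) (p.smul_mem _ hb),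
      _, p.add_mem (p.smul_mem _ ha) (p.smul_mem _ hb), (smul_add_I_smul c a b).symm⟩

theorem Submodule.mem_complexification_of_mem {p : Submodule ℝ V} {x : V} (hx : x ∈ p) :
    x ∈ p.complexification :=
  ⟨x, hx, 0, p.zero_mem, by simp⟩

end Complexification

namespace LieAlgebra.SpecialUnitary

open Matrix Complex Module

variable {ι : Type*} [Fintype ι] [DecidableEq ι]

variable (ι) in
def su : LieSubalgebra ℝ (Matrix ι ι ℂ) where
  carrier := {X | Xᴴ = -X ∧ X.trace = 0}
  add_mem' := by
    rintro X Y ⟨hX, hX'⟩ ⟨hY, hY'⟩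
    exact ⟨by rw [conjTranspose_add, hX, hY, neg_add], by rw [trace_add, hX', hY', add_zero]⟩
  zero_mem' := ⟨by simp, by simp⟩
  smul_mem' := by
    rintro c X ⟨hX, hX'⟩
    exact ⟨by rw [conjTranspose_smul, hX, star_trivial, smul_neg],
      by rw [trace_smul, hX', smul_zero]⟩
  lie_mem' := by
    rintro X Y ⟨hX, -⟩ ⟨hY, -⟩
    refine ⟨?_, matrix_trace_commutator_zero _ _ X Y⟩
    rw [Ring.lie_def, conjTranspose_sub, conjTranspose_mul, conjTranspose_mul, hX, hY]
    noncomm_ring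

theorem exists_add_I_smul_eq {Y : Matrix ι ι ℂ} (hY : Y.trace = 0) :
    ∃ A ∈ su ι, ∃ B ∈ su ι, A + I • B = Y := by
  refine ⟨(2⁻¹ : ℝ) • (Y - Yᴴ), ⟨?_, ?_⟩, (2⁻¹ : ℝ) • (-I) • (Y + Yᴴ), ⟨?_, ?_⟩, ?_⟩
  · simp only [conjTranspose_smul, conjTranspose_sub, conjTranspose_conjTranspose, star_trivial]
    module
  · simp [trace_smul, trace_sub, trace_conjTranspose, hY]
  · simp only [conjTranspose_smul, conjTranspose_add, conjTranspose_conjTranspose, star_trivial,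
      star_neg, star_def, conj_I, neg_neg]
    module
  · simp [trace_smul, trace_add, trace_conjTranspose, hY]
  · rw [smul_comm I (2⁻¹ : ℝ), smul_smul I (-I), show I * -I = 1 by simp, one_smul]
    module

theorem finrank_su : finrank ℝ (su ι) = Fintype.card ι ^ 2 - 1 := by
  let F : su ι × su ι →ₗ[ℝ] Matrix ι ι ℂ :=
    (su ι).toSubmodule.subtype.coprod (I • (su ι).toSubmodule.subtype)
  have hF : ∀ x, F x = x.1 + I • x.2 := fun _ => rfl
  have hinj : Function.Injective F := by
    rw [← LinearMap.ker_eq_bot, LinearMap.ker_eq_bot']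
    rintro ⟨A, B⟩ h
    rw [hF] at h
    have hB := eq_zero_of_add_I_smul_eq_zero A.2.1 B.2.1 h
    have hA : (A : Matrix ι ι ℂ) = 0 := by simpa [hB] using h
    ext1 <;> ext1 <;> simp [hA, hB]
  have hrange : LinearMap.range F = LinearMap.ker (traceLinearMap ι ℝ ℂ) := by
    ext Y
    constructor
    · rintro ⟨⟨A, B⟩, rfl⟩
      simp [hF, trace_add, trace_smul, A.2.2, B.2.2]
    · intro hY
      obtain ⟨A, hA, B, hB, rfl⟩ := exists_add_I_smul_eq (LinearMap.mem_ker.mp hY)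
      exact ⟨(⟨A, hA⟩, ⟨B, hB⟩), rfl⟩
  have hdim := LinearMap.finrank_range_of_inj hinj
  rw [hrange, finrank_prod] at hdim
  have hrn := (traceLinearMap ι ℝ ℂ).finrank_range_add_finrank_ker
  rw [finrank_matrix, Complex.finrank_real_complex] at hrn
  rcases isEmpty_or_nonempty ι with hι | hι
  · simp only [Fintype.card_eq_zero, zero_mul] at hrn
    simp only [Fintype.card_eq_zero]
    omega
  · rw [LinearMap.range_eq_top.mpr trace_surjective, finrank_top,
      Complex.finrank_real_complex] at hrn
    rw [sq]
    omega

theorem notMem_range_scalar_of_mem_su {X : Matrix ι ι ℂ} (hX : X ∈ su ι) (hX0 : X ≠ 0) :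
    X ∉ Set.range (scalar ι) := by
  rintro ⟨c, rfl⟩
  have htr : (Fintype.card ι : ℂ) * c = 0 := by simpa using hX.2
  rcases mul_eq_zero.mp htr with hι | rfl
  · have : IsEmpty ι := Fintype.card_eq_zero_iff.mp (by exact_mod_cast hι)
    exact hX0 (Subsingleton.elim _ _)
  · exact hX0 (map_zero _)

theorem su_le_of_lie_mem {p : Submodule ℝ (Matrix ι ι ℂ)} (hp : p ≤ (su ι).toSubmodule)
    (hlie : ∀ Y ∈ su ι, ∀ X ∈ p, ⁅Y, X⁆ ∈ p) {X : Matrix ι ι ℂ} (hX : X ∈ p) (hX0 : X ≠ 0) :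
    (su ι).toSubmodule ≤ p := by
  have hW : ∀ Y : Matrix ι ι ℂ, Y.trace = 0 →
      ∀ Z ∈ p.complexification, ⁅Y, Z⁆ ∈ p.complexification := by
    rintro Y hY _ ⟨A, hA, B, hB, rfl⟩
    obtain ⟨A', hA', B', hB', rfl⟩ := exists_add_I_smul_eq hY
    rw [lie_add_I_smul_lie_add_I_smul]
    exact ⟨_, p.sub_mem (hlie _ hA' _ hA) (hlie _ hB' _ hB),
      _, p.add_mem (hlie _ hA' _ hB) (hlie _ hB' _ hA), rfl⟩
  intro Z hZ
  obtain ⟨A, hA, B, hB, hAB⟩ := traceless_mem_of_notMem_range_scalar hW two_ne_zero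
    (Submodule.mem_complexification_of_mem hX) (notMem_range_scalar_of_mem_su (hp hX) hX0) hZ.2
  have hskew : (A - Z)ᴴ = -(A - Z) := by
    rw [conjTranspose_sub, (hp hA).1, hZ.1, neg_sub, neg_sub_neg]
  have hB0 : B = 0 :=
    eq_zero_of_add_I_smul_eq_zero hskew (hp hB).1 (by rw [sub_add_eq_add_sub, hAB, sub_self])
  rwa [← hAB, hB0, smul_zero, add_zero]

theorem isSimple_su (h : 2 ≤ Fintype.card ι) : IsSimple ℝ (su ι) where
  eq_bot_or_eq_top I := by
    refine or_iff_not_imp_left.mpr fun hI => ?_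
    let p := I.toSubmodule.map ((su ι).incl : su ι →ₗ[ℝ] Matrix ι ι ℂ)
    obtain ⟨x, hx, hx0⟩ := Submodule.exists_mem_ne_zero_of_ne_bot
      (by rwa [Ne, LieSubmodule.toSubmodule_eq_bot] : I.toSubmodule ≠ ⊥)
    have hle : (su ι).toSubmodule ≤ p := by
      refine su_le_of_lie_mem (p := p) ?_ ?_ (Submodule.mem_map_of_mem hx) (by simpa using hx0)
      · rintro _ ⟨y, -, rfl⟩
        exact y.2
      · rintro Y hY _ ⟨y, hy, rfl⟩
        exact ⟨⁅⟨Y, hY⟩, y⁆, I.lie_mem hy, rfl⟩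
    rw [eq_top_iff]
    rintro z -
    obtain ⟨y, hy, hyz⟩ := hle z.2
    rwa [← Subtype.ext hyz]
  non_abelian := by
    intro habel
    have hzero : ∀ A ∈ su ι, ∀ B ∈ su ι, ⁅A, B⁆ = 0 := fun A hA B hB => by
      simpa using congrArg Subtype.val (trivial_lie_zero (su ι) (su ι) ⟨A, hA⟩ ⟨B, hB⟩)
    refine SpecialLinear.sl_non_abelian ι ℂ (by omega) ⟨fun Y Y' => Subtype.ext ?_⟩
    obtain ⟨A', hA', B', hB', hY⟩ := exists_add_I_smul_eq Y.2
    obtain ⟨A, hA, B, hB, hY'⟩ := exists_add_I_smul_eq Y'.2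
    rw [LieSubalgebra.coe_bracket, ← hY, ← hY', lie_add_I_smul_lie_add_I_smul,
      hzero _ hA' _ hA, hzero _ hA' _ hB, hzero _ hB' _ hA, hzero _ hB' _ hB]
    simp

theorem subsingleton_su (h : Fintype.card ι ≤ 1) : Subsingleton (su ι) := by
  have : Subsingleton ι := Fintype.card_le_one_iff_subsingleton.mp h
  have hzero : ∀ Z ∈ su ι, Z = 0 := fun Z hZ => by
    ext a b
    obtain rfl := Subsingleton.elim a b
    simpa [trace, Fintype.sum_subsingleton _ a] using hZ.2
  exact ⟨fun X Y => Subtype.ext (by rw [hzero _ X.2, hzero _ Y.2])⟩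

theorem isSimple_or_subsingleton_su : IsSimple ℝ (su ι) ∨ Subsingleton (su ι) := by
  rcases le_or_gt 2 (Fintype.card ι) with h | h
  · exact Or.inl (isSimple_su h)
  · exact Or.inr (subsingleton_su (by omega))

end LieAlgebra.SpecialUnitary

namespace Matrix

variable {κ : Type*} {ι : κ → Type*}

theorem blockDiagonal'_blockDiag' [DecidableEq κ] {α : Type*} [Zero α]
    {M : Matrix (Σ j, ι j) (Σ j, ι j) α}
    (h : ∀ (j k : κ) (a : ι j) (b : ι k), j ≠ k → M ⟨j, a⟩ ⟨k, b⟩ = 0) :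
    blockDiagonal' (blockDiag' M) = M := by
  ext ⟨j, a⟩ ⟨k, b⟩
  rcases eq_or_ne j k with rfl | hjk
  · simp [blockDiagonal'_apply_eq, blockDiag'_apply]
  · rw [blockDiagonal'_apply_ne _ _ _ hjk, h j k a b hjk]

theorem blockDiag'_lie_blockDiagonal' [Fintype κ] [DecidableEq κ] [∀ j, Fintype (ι j)]
    [∀ j, DecidableEq (ι j)] {α : Type*} [Ring α] (A B : ∀ j, Matrix (ι j) (ι j) α) (j : κ) :
    blockDiag' ⁅blockDiagonal' A, blockDiagonal' B⁆ j = ⁅A j, B j⁆ := by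
  simp only [Ring.lie_def, ← blockDiagonal'_mul, ← blockDiagonal'_sub, blockDiag'_blockDiagonal',
    Pi.sub_apply]

end Matrix

namespace LieAlgebra.SpecialUnitary

open Matrix Module

variable {κ : Type*} {ι : κ → Type*} [∀ j, Fintype (ι j)] [∀ j, DecidableEq (ι j)]

theorem blockDiag'_mem_su {M : Matrix (Σ j, ι j) (Σ j, ι j) ℂ} (hM : Mᴴ = -M) {j : κ}
    (htr : ∑ a : ι j, M ⟨j, a⟩ ⟨j, a⟩ = 0) : blockDiag' M j ∈ su (ι j) :=
  ⟨by rw [← blockDiag'_conjTranspose, hM, blockDiag'_neg]; rfl, htr⟩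

variable [Fintype κ] [DecidableEq κ] {R : LieSubalgebra ℝ (Matrix (Σ j, ι j) (Σ j, ι j) ℂ)}
  (hR : ∀ M ∈ R, blockDiagonal' (blockDiag' M) = M ∧ ∀ j, blockDiag' M j ∈ su (ι j))

def blockProj (j : κ) : R →ₗ⁅ℝ⁆ su (ι j) where
  toFun M := ⟨blockDiag' M.1 j, (hR M.1 M.2).2 j⟩
  map_add' _ _ := Subtype.ext (by simp [blockDiag'_add])
  map_smul' _ _ := Subtype.ext (by simp [blockDiag'_smul])
  map_lie' {M N} := Subtype.ext <| by
    change blockDiag' ⁅M.1, N.1⁆ j = ⁅blockDiag' M.1 j, blockDiag' N.1 j⁆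
    conv_lhs => rw [← (hR _ M.2).1, ← (hR _ N.2).1]
    exact blockDiag'_lie_blockDiagonal' _ _ j

include hR in
theorem blockDiagonal'_mem (hsurj : ∀ j, ∀ Z ∈ su (ι j), ∃ M ∈ R, blockDiag' M j = Z)
    (hcard : Pairwise fun j k => Fintype.card (ι j) ≠ Fintype.card (ι k))
    (hne : ∀ j, Nonempty (ι j)) (Z : ∀ j, su (ι j)) :
    blockDiagonal' (fun j => (Z j : Matrix (ι j) (ι j) ℂ)) ∈ R := by
  have hπ : ∀ j, Function.Surjective (blockProj hR j) := by
    rintro j ⟨Z, hZ⟩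
    obtain ⟨M, hM, hMZ⟩ := hsurj j Z hZ
    exact ⟨⟨M, hM⟩, Subtype.ext hMZ⟩
  have hrank : Pairwise fun j k => finrank ℝ (su (ι j)) ≠ finrank ℝ (su (ι k)) := by
    intro j k hjk h
    have hj := Nat.one_le_pow 2 _ (Fintype.card_pos (α := ι j))
    have hk := Nat.one_le_pow 2 _ (Fintype.card_pos (α := ι k))
    rw [finrank_su, finrank_su] at h
    exact hcard hjk (Nat.pow_left_injective two_ne_zero
      (show Fintype.card (ι j) ^ 2 = Fintype.card (ι k) ^ 2 by omega))
  obtain ⟨M, hM⟩ := LieHom.surjective_pi_of_pairwise_finrank_ne hπ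
    (fun _ => isSimple_or_subsingleton_su) hrank Z
  have hblocks : blockDiag' (M : Matrix _ _ ℂ) = fun j => (Z j : Matrix (ι j) (ι j) ℂ) :=
    funext fun j => congrArg Subtype.val (congrFun hM j)
  rw [← hblocks, (hR _ M.2).1]
  exact M.2

end LieAlgebra.SpecialUnitary

open LieAlgebra.SpecialUnitary Matrix

/-- let n₁ > n₂ > ⋯ > n_r ≥ 1 be pairwise distinct block sizes and R a
Lie subalgebra of the block-diagonal algebra ⊕_j su(n_j) (block-diagonal skew-Hermitian
matrices with each diagonal block traceless).  If the projection of R onto every block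
su(n_j) is surjective (weak subspace controllability), then R is the whole direct sum. -/
theorem stmt13 (r : ℕ) (n : Fin r → ℕ) (hmono : StrictAnti n) (hpos : ∀ j, 1 ≤ n j)
    (R : LieSubalgebra ℝ (Matrix (Σ j : Fin r, Fin (n j)) (Σ j : Fin r, Fin (n j)) ℂ))
    (hblock : ∀ M ∈ R,
      Mᴴ = -M ∧
      (∀ (j k : Fin r) (a : Fin (n j)) (b : Fin (n k)), j ≠ k → M ⟨j, a⟩ ⟨k, b⟩ = 0) ∧
      (∀ j : Fin r, (∑ a : Fin (n j), M ⟨j, a⟩ ⟨j, a⟩) = 0))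
    (hweak : ∀ (j : Fin r) (Z : Matrix (Fin (n j)) (Fin (n j)) ℂ),
      Zᴴ = -Z → Z.trace = 0 →
      ∃ M ∈ R, ∀ a b : Fin (n j), M ⟨j, a⟩ ⟨j, b⟩ = Z a b) :
    (R : Set (Matrix (Σ j : Fin r, Fin (n j)) (Σ j : Fin r, Fin (n j)) ℂ)) =
      {M | Mᴴ = -M ∧
        (∀ (j k : Fin r) (a : Fin (n j)) (b : Fin (n k)), j ≠ k → M ⟨j, a⟩ ⟨k, b⟩ = 0) ∧
        (∀ j : Fin r, (∑ a : Fin (n j), M ⟨j, a⟩ ⟨j, a⟩) = 0)} := by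
  have hR : ∀ M ∈ R, blockDiagonal' (blockDiag' M) = M ∧ ∀ j, blockDiag' M j ∈ su (Fin (n j)) :=
    fun M hM => ⟨blockDiagonal'_blockDiag' (hblock M hM).2.1,
      fun j => blockDiag'_mem_su (hblock M hM).1 ((hblock M hM).2.2 j)⟩
  have hsurj : ∀ j, ∀ Z ∈ su (Fin (n j)), ∃ M ∈ R, blockDiag' M j = Z := fun j Z hZ => by
    obtain ⟨M, hM, hMZ⟩ := hweak j Z hZ.1 hZ.2
    exact ⟨M, hM, Matrix.ext hMZ⟩
  refine Set.Subset.antisymm (fun M hM => hblock M hM) fun M ⟨hskew, hoff, htr⟩ => ?_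
  rw [← blockDiagonal'_blockDiag' hoff]
  exact blockDiagonal'_mem hR hsurj (fun j k hjk => by simpa using hmono.injective.ne hjk)
    (fun j => Fin.pos_iff_nonempty.mp (hpos j)) fun j => ⟨_, blockDiag'_mem_su hskew (htr j)⟩
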